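/- arXiv:1708.07828 — 3 statements merged into one kernel-verified Lean document; each statement's English description precedes it below -/
import Mathlib

section
/- Let q be a prime power, t ≥ 2 an integer, α a primitive element of F_{q^t}, w = (q^t-1)/(q-1), and τ an integer with τ not ≡ 0 (mod w). For (a,b) ∈ F_q × F_q let N(a,b) be the number of i ∈ [0, q^t - 2] with (Tr_{q^t/q}(α^i), Tr_{q^t/q}(α^{i+τ})) = (a,b). Then N(a,b) = q^{t-2} if (a,b) ≠ (0,0), and N(0,0) = q^{t-2} - 1. -/
/-!
Put `c = α ^ τ`. Since `w ∤ τ`, `c` is not in `F`, so by nondegeneracy of the trace form the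
`F`-linear map `x ↦ (Tr x, Tr (x c))` from `K` onto `F × F` is surjective and each of its fibres
has `q ^ t / q ^ 2` elements. As `i` runs over `[0, q ^ t - 2]`, `α ^ i` runs once over `Kˣ`,
so `N(a, b)` is the size of a fibre with `x = 0` removed, which only matters for `(a, b) = (0, 0)`.
-/

open Finset

theorem AddMonoidHom.card_fiber_mul_card_of_surjective {G H : Type*} [AddGroup G] [AddGroup H]
    [Fintype G] [Fintype H] [DecidableEq H] (f : G →+ H) (hf : Function.Surjective f) (y : H) :
    #{x | f x = y} * Fintype.card H = Fintype.card G := by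
  have hfibers : ∀ y' : H, #{x | f x = y'} = #{x | f x = y} := fun y' ↦ by
    obtain ⟨d, hd⟩ := hf (-y + y')
    refine card_nbij' (· - d) (· + d) ?_ ?_ (fun _ _ ↦ by simp) (fun _ _ ↦ by simp) <;>
      intro x hx <;> simp_all [← add_assoc]
  rw [card_univ.symm.trans (card_eq_sum_card_fiberwise fun x _ ↦ mem_univ (f x)),
    sum_congr rfl fun y' _ ↦ hfibers y', sum_const, card_univ, smul_eq_mul, mul_comm]

section TracePair

variable (F : Type*) {K : Type*} [Field F] [Field K] [Algebra F K]

noncomputable def traceMulPair (c : K) : K →ₗ[F] F × F :=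
  (Algebra.trace F K).prod (Algebra.trace F K ∘ₗ LinearMap.mulRight F c)

@[simp]
theorem traceMulPair_apply (c x : K) :
    traceMulPair F c x = (Algebra.trace F K x, Algebra.trace F K (x * c)) := rfl

variable [FiniteDimensional F K] [Algebra.IsSeparable F K] {F}

theorem exists_trace_eq_zero_trace_mul_ne_zero {c : K} (hc : c ∉ Set.range (algebraMap F K)) :
    ∃ z, Algebra.trace F K z = 0 ∧ Algebra.trace F K (z * c) ≠ 0 := by
  by_contra! h
  obtain ⟨x₀, hx₀⟩ := Algebra.trace_surjective F K 1
  set l := Algebra.trace F K (x₀ * c)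
  -- x - Tr(x) x₀ has trace zero, so Tr(x c) = Tr(x) l for every x.
  have hprop : ∀ x, Algebra.trace F K ((c - algebraMap F K l) * x) = 0 := fun x ↦ by
    have := h (x - Algebra.trace F K x • x₀) (by simp [hx₀])
    rw [sub_mul, smul_mul_assoc, map_sub, map_smul, smul_eq_mul, sub_eq_zero] at this
    rw [sub_mul, map_sub, ← Algebra.smul_def, map_smul, mul_comm c, this, smul_eq_mul,
      mul_comm, sub_self]
  have hzero : c - algebraMap F K l = 0 := (traceForm_nondegenerate F K).1 _ hprop
  exact hc ⟨l, (sub_eq_zero.mp hzero).symm⟩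

theorem traceMulPair_surjective {c : K} (hc : c ∉ Set.range (algebraMap F K)) :
    Function.Surjective (traceMulPair F c) := by
  obtain ⟨z, hz, hzc⟩ := exists_trace_eq_zero_trace_mul_ne_zero hc
  obtain ⟨x₀, hx₀⟩ := Algebra.trace_surjective F K 1
  rintro ⟨a, b⟩
  refine ⟨a • x₀ + ((b - a * Algebra.trace F K (x₀ * c)) / Algebra.trace F K (z * c)) • z, ?_⟩
  rw [traceMulPair_apply, Prod.mk.injEq]
  simp only [add_mul, smul_mul_assoc, map_add, map_smul, smul_eq_mul, hx₀, hz]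
  constructor
  · ring
  · rw [div_mul_cancel₀ _ hzc, add_sub_cancel]

end TracePair

theorem zpow_notMem_range_algebraMap {F K : Type*} [Field F] [Fintype F] [Field K]
    [Algebra F K] {α : K} {w : ℕ} (hw : w ≠ 0) (hα : orderOf α = w * (Fintype.card F - 1))
    {τ : ℤ} (hτ : ¬ (w : ℤ) ∣ τ) : α ^ τ ∉ Set.range (algebraMap F K) := by
  have hq : Fintype.card F - 1 ≠ 0 := Nat.sub_ne_zero_of_lt Fintype.one_lt_card
  obtain ⟨u, rfl⟩ : IsUnit α :=
    (orderOf_pos_iff.mp (hα ▸ Nat.pos_of_ne_zero (mul_ne_zero hw hq))).isUnit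
  rintro ⟨e, he⟩
  have he0 : e ≠ 0 := by
    rintro rfl
    exact (zpow_ne_zero τ u.ne_zero) (by simpa using he.symm)
  have hpow : u ^ (τ * (Fintype.card F - 1 : ℕ)) = 1 := by
    apply Units.ext
    rw [zpow_mul, zpow_natCast, Units.val_pow_eq_pow_val, Units.val_zpow_eq_zpow_val, ← he,
      ← map_pow, FiniteField.pow_card_sub_one_eq_one e he0, map_one, Units.val_one]
  have := orderOf_dvd_iff_zpow_eq_one.mpr hpow
  rw [← orderOf_units, hα, Nat.cast_mul] at this
  exact hτ ((mul_dvd_mul_iff_right (by exact_mod_cast hq)).mp this)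

theorem IsPrimitiveRoot.card_filter_range_pow {K : Type*} [Field K] [Fintype K] [DecidableEq K]
    {α : K} (hα : IsPrimitiveRoot α (Fintype.card K - 1)) (p : K → Prop) [DecidablePred p] :
    #{i ∈ range (Fintype.card K - 1) | p (α ^ i)} = #(({x | p x} : Finset K).erase 0) := by
  have : NeZero (Fintype.card K - 1) := ⟨Nat.sub_ne_zero_of_lt Fintype.one_lt_card⟩
  refine card_nbij (α ^ ·) (fun i hi ↦ ?_) (fun i hi j hj hij ↦ ?_) (fun x hx ↦ ?_)
  · simp only [coe_filter, mem_range, Set.mem_ofPred_eq] at hi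
    simpa [hi.2] using pow_ne_zero i (hα.ne_zero (NeZero.ne _))
  · simp only [coe_filter, mem_range, Set.mem_ofPred_eq] at hi hj
    exact hα.pow_inj hi.1 hj.1 hij
  · simp only [coe_erase, coe_filter, mem_univ, true_and, Set.mem_sdiff, Set.mem_ofPred_eq,
      Set.mem_singleton_iff] at hx
    obtain ⟨i, hi, rfl⟩ := hα.eq_pow_of_pow_eq_one (FiniteField.pow_card_sub_one_eq_one x hx.2)
    exact ⟨i, by simp [hi, hx.1], rfl⟩

theorem stmt_9_general {F K : Type*} [Field F] [Field K] [Fintype F] [Fintype K] [Algebra F K]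
    [DecidableEq F]
    (q t : ℕ) (ht : 2 ≤ t)
    (hF : Fintype.card F = q) (hK : Fintype.card K = q ^ t)
    (α : K) (hα : orderOf α = q ^ t - 1)
    (τ : ℤ) (hτ : ¬ (((q ^ t - 1) / (q - 1) : ℕ) : ℤ) ∣ τ) :
    (∀ a b : F, (a, b) ≠ (0, 0) →
      ((Finset.range (q ^ t - 1)).filter fun i : ℕ =>
          Algebra.trace F K (α ^ ((i : ℕ) : ℤ)) = a ∧
          Algebra.trace F K (α ^ (((i : ℕ) : ℤ) + τ)) = b).card = q ^ (t - 2)) ∧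
    ((Finset.range (q ^ t - 1)).filter fun i : ℕ =>
        Algebra.trace F K (α ^ ((i : ℕ) : ℤ)) = (0 : F) ∧
        Algebra.trace F K (α ^ (((i : ℕ) : ℤ) + τ)) = (0 : F)).card = q ^ (t - 2) - 1 := by
  classical
  have hn : q ^ t - 1 ≠ 0 := hK ▸ Nat.sub_ne_zero_of_lt Fintype.one_lt_card
  have hprim : IsPrimitiveRoot α (Fintype.card K - 1) := hK ▸ hα ▸ IsPrimitiveRoot.orderOf α
  have hα0 : α ≠ 0 := hprim.ne_zero (hK ▸ hn)
  have hord : orderOf α = (q ^ t - 1) / (q - 1) * (Fintype.card F - 1) := by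
    rw [hα, hF, Nat.div_mul_cancel (by simpa using Nat.sub_dvd_pow_sub_pow q 1 t)]
  have hc : α ^ τ ∉ Set.range (algebraMap F K) :=
    zpow_notMem_range_algebraMap (left_ne_zero_of_mul (hord ▸ hα ▸ hn)) hord hτ
  set P := traceMulPair F (α ^ τ)
  have hfiber : ∀ y, #{x | P x = y} = q ^ (t - 2) := fun y ↦ by
    have := P.toAddMonoidHom.card_fiber_mul_card_of_surjective (traceMulPair_surjective hc) y
    rw [Fintype.card_prod, hF, hK, ← sq, ← Nat.pow_sub_mul_pow q ht] at this
    exact Nat.eq_of_mul_eq_mul_right (pow_pos (hF ▸ Fintype.card_pos) 2) this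
  have hcount : ∀ a b : F, #{i ∈ range (q ^ t - 1) | Algebra.trace F K (α ^ ((i : ℕ) : ℤ)) = a ∧
      Algebra.trace F K (α ^ ((i : ℤ) + τ)) = b} = #(({x | P x = (a, b)} : Finset K).erase 0) :=
    fun a b ↦ by
      rw [← hprim.card_filter_range_pow, hK]
      refine congrArg card (filter_congr fun i _ ↦ ?_)
      simp [P, zpow_add₀ hα0]
  refine ⟨fun a b hab ↦ ?_, ?_⟩
  · rw [hcount, erase_eq_of_notMem fun h ↦ hab ((mem_filter.mp h).2.symm.trans (map_zero P)),
      hfiber]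
  · rw [hcount, card_erase_of_mem (s := {x | P x = (0, 0)})
      (mem_filter.mpr ⟨mem_univ _, map_zero P⟩), hfiber]

theorem stmt_9 {F K : Type*} [Field F] [Field K] [Fintype F] [Fintype K] [Algebra F K]
    [DecidableEq F]
    (q t : ℕ) (hq : IsPrimePow q) (ht : 2 ≤ t)
    (hF : Fintype.card F = q) (hK : Fintype.card K = q ^ t)
    (α : K) (hα : orderOf α = q ^ t - 1)
    (τ : ℤ) (hτ : ¬ (((q ^ t - 1) / (q - 1) : ℕ) : ℤ) ∣ τ) :
    (∀ a b : F, (a, b) ≠ (0, 0) →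
      ((Finset.range (q ^ t - 1)).filter fun i : ℕ =>
          Algebra.trace F K (α ^ ((i : ℕ) : ℤ)) = a ∧
          Algebra.trace F K (α ^ (((i : ℕ) : ℤ) + τ)) = b).card = q ^ (t - 2)) ∧
    ((Finset.range (q ^ t - 1)).filter fun i : ℕ =>
        Algebra.trace F K (α ^ ((i : ℕ) : ℤ)) = (0 : F) ∧
        Algebra.trace F K (α ^ (((i : ℕ) : ℤ) + τ)) = (0 : F)).card = q ^ (t - 2) - 1 :=
  stmt_9_general q t ht hF hK α hα τ hτ
end

section
/- Let p be a prime and q = p^e, t ≥ 2, and set w = (q^t - 1)/(q - 1). For every i ∈ Z coprime to w, the cyclotomic coset C_{p,w}^i = { i·p^r mod w : r ≥ 0 } has exactly te elements. -/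
/-!
Since `w * (q - 1) = q ^ t - 1`, we have `p ^ (t * e) = q ^ t ≡ 1 [MOD w]`. A proper divisor
`d` of `t * e` satisfies `d ≤ e * (t - 1)`, so `1 < p ^ d ≤ q ^ (t - 1) < w` and
`p ^ d ≢ 1 [MOD w]`.
Hence `p` has order `t * e` modulo `w`, and the coset of the unit `i` is a translate of the
cyclic group generated by `p`.
-/

theorem IsOfFinOrder.ncard_range_pow {M : Type*} [Monoid M] {x : M} (hx : IsOfFinOrder x) :
    (Set.range (x ^ · : ℕ → M)).ncard = orderOf x := by
  rw [← Submonoid.coe_powers, ← Nat.card_coe_set_eq]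
  exact (Nat.card_congr (finEquivPowers hx)).symm.trans (Nat.card_fin _)

theorem ncard_setOf_mul_pow_mod {n i a : ℕ} [NeZero n] (hi : i.Coprime n)
    (ha : IsOfFinOrder (a : ZMod n)) :
    {x : ℕ | ∃ r : ℕ, x = i * a ^ r % n}.ncard = orderOf (a : ZMod n) := by
  have hcoset : {x : ℕ | ∃ r : ℕ, x = i * a ^ r % n} =
      ZMod.val '' ((i : ZMod n) * ·) '' Set.range ((a : ZMod n) ^ · : ℕ → ZMod n) := by
    ext x
    simp only [Set.mem_ofPred_eq, Set.mem_image, Set.mem_range, exists_exists_eq_and]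
    refine exists_congr fun r => ?_
    rw [← ZMod.val_natCast n (i * a ^ r), Nat.cast_mul, Nat.cast_pow, eq_comm]
  rw [hcoset, Set.ncard_image_of_injective _ (ZMod.val_injective n),
    Set.ncard_image_of_injective _ ((ZMod.isUnit_iff_coprime i n).mpr hi).mul_right_injective,
    ha.ncard_range_pow]

theorem ZMod.natCast_pow_eq_one_iff_dvd {n a m : ℕ} (ha : 0 < a) :
    (a : ZMod n) ^ m = 1 ↔ n ∣ a ^ m - 1 := by
  rw [← ZMod.natCast_eq_zero_iff, Nat.cast_sub (Nat.one_le_pow _ _ ha), Nat.cast_pow,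
    Nat.cast_one, sub_eq_zero]

theorem orderOf_natCast_eq_of_pow_half_lt {n a m : ℕ} (ha : 1 < a) (hm : 0 < m)
    (hpow : (a : ZMod n) ^ m = 1) (hlt : a ^ (m / 2) < n) :
    orderOf (a : ZMod n) = m := by
  set d := orderOf (a : ZMod n)
  have hd_pos : 0 < d := (isOfFinOrder_iff_pow_eq_one.mpr ⟨m, hm, hpow⟩).orderOf_pos
  obtain ⟨k, hk⟩ := orderOf_dvd_of_pow_eq_one hpow
  by_contra hne
  have hd_le : d ≤ m / 2 := by
    have hk2 : 2 ≤ k := by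
      rcases k with _ | _ | k
      · omega
      · exact absurd (by simpa using hk.symm) hne
      · omega
    exact (Nat.le_div_iff_mul_le two_pos).mpr (hk ▸ Nat.mul_le_mul_left d hk2)
  have hdvd : n ∣ a ^ d - 1 :=
    (ZMod.natCast_pow_eq_one_iff_dvd (by omega)).mp (pow_orderOf_eq_one _)
  have hlt_d : 1 < a ^ d := Nat.one_lt_pow hd_pos.ne' ha
  have : n ≤ a ^ d - 1 := Nat.le_of_dvd (by omega) hdvd
  have : a ^ d ≤ a ^ (m / 2) := Nat.pow_le_pow_right (by omega) hd_le
  omega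

theorem pow_pred_lt_pow_sub_one_div_sub_one {q t : ℕ} (hq : 2 ≤ q) (ht : 2 ≤ t) :
    q ^ (t - 1) < (q ^ t - 1) / (q - 1) := by
  obtain ⟨s, rfl⟩ : ∃ s, t = s + 2 := ⟨t - 2, by omega⟩
  rw [← Nat.geomSum_eq hq, Finset.sum_range_succ, Finset.sum_range_succ']
  simp

theorem stmt_11 (p e t q w : ℕ) (hp : p.Prime) (he : 0 < e) (ht : 2 ≤ t)
    (hq : q = p ^ e) (hw : w = (q ^ t - 1) / (q - 1))
    (i : ℕ) (hi : Nat.Coprime i w) :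
    ({x : ℕ | ∃ r : ℕ, x = i * p ^ r % w} : Set ℕ).ncard = t * e := by
  have hq2 : 2 ≤ q := hq ▸ hp.two_le.trans (Nat.le_self_pow he.ne' p)
  have hw_gt : q ^ (t - 1) < w := hw ▸ pow_pred_lt_pow_sub_one_div_sub_one hq2 ht
  have : NeZero w := ⟨by omega⟩
  have hpow : (p : ZMod w) ^ (t * e) = 1 := by
    rw [ZMod.natCast_pow_eq_one_iff_dvd hp.pos, mul_comm, pow_mul, ← hq]
    exact hw ▸ Nat.div_dvd_of_dvd (by simpa using Nat.sub_dvd_pow_sub_pow q 1 t)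
  have hhalf : p ^ (t * e / 2) < w := by
    have : t * e / 2 ≤ e * (t - 1) := by
      refine Nat.div_le_of_le_mul ?_
      calc t * e ≤ 2 * (t - 1) * e := Nat.mul_le_mul_right e (by omega)
        _ = 2 * (e * (t - 1)) := by ring
    calc p ^ (t * e / 2) ≤ p ^ (e * (t - 1)) := Nat.pow_le_pow_right hp.pos this
      _ = q ^ (t - 1) := by rw [hq, pow_mul]
      _ < w := hw_gt
  rw [ncard_setOf_mul_pow_mod hi (isOfFinOrder_iff_pow_eq_one.mpr ⟨_, by positivity, hpow⟩),
    orderOf_natCast_eq_of_pow_half_lt hp.one_lt (by positivity) hpow hhalf]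
end

section
/- Let n be a positive integer and S a nonempty subset of [0, n-1]. Among all sets of the form S +_n i = {(s+i) mod n : s ∈ S}, i ∈ [0, n-1], there exists a unique set T with 0 ∈ T whose binary representation bin_n(T) is a necklace (lexicographically minimal among its cyclic shifts), where bin_n(T) is the binary string 0^{n - max(T) - 1} b_0 b_1 ... b_{max(T)} with b_i = 1 iff i ∈ T. -/
/-- The binary representation `bin_n(T)` of a set `T ⊆ [0, n-1]`:
the string `0^(n - max T - 1) b_0 b_1 ⋯ b_(max T)` with `b_i = 1` iff `i ∈ T`. -/
def binRep (n : ℕ) (T : Finset ℕ) : List Bool :=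
  List.replicate (n - (T.max.getD 0) - 1) false ++
    List.ofFn (fun i : Fin ((T.max.getD 0) + 1) => decide ((i : ℕ) ∈ T))

/-- A binary string is a necklace if no cyclic shift of it is lexicographically smaller. -/
def IsNecklace (a : List Bool) : Prop := ∀ i : ℕ, ¬ List.Lex (· < ·) (a.rotate i) a

/-!
Encode a set `T ⊆ [0, n)` by its characteristic word `b_0 ⋯ b_(n-1)`; shifting `T` by `i`
rotates this word, and `bin_n(T)` is its rotation ending at the last `1`. So every `bin_n(T)`
for a shift `T` of `S` is a rotation of the characteristic word `w` of `S`. For existence, take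
the least rotation `r` of `w`: it is a necklace, it ends in `1` (otherwise moving its final `0`
to the front would make it smaller), and stripping its leading zeros and reading off the
positions of the ones gives a shift `T ∋ 0` with `bin_n(T) = r`. For uniqueness, two necklaces
that are rotations of each other coincide, and `bin_n` is injective on sets containing `0`.
-/

lemma List.exists_eq_replicate_false_append {l : List Bool} (h : true ∈ l) :
    ∃ c v, l = List.replicate c false ++ true :: v := by
  induction l with
  | nil => simp at h
  | cons x l ih =>
    cases x with
    | true => exact ⟨0, l, rfl⟩
    | false =>
      obtain ⟨c, v, rfl⟩ := ih (by simpa using h)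
      exact ⟨c + 1, v, rfl⟩

lemma false_cons_lt_append_false {a : List Bool} (h : true ∈ a) : false :: a < a ++ [false] := by
  induction a with
  | nil => simp at h
  | cons x a ih =>
    cases x with
    | true => exact List.Lex.rel (by decide)
    | false => exact List.Lex.cons (ih (by simpa using h))

lemma IsNecklace.getLast?_eq_true {r : List Bool} (hr : IsNecklace r) (h : true ∈ r) :
    r.getLast? = some true := by
  rcases List.eq_nil_or_concat' r with rfl | ⟨a, x, rfl⟩
  · simp at h
  cases x with
  | true => simp
  | false =>
    have ha : true ∈ a := by simpa using h
    have := hr a.length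
    rw [List.rotate_append_length_eq] at this
    exact absurd (false_cons_lt_append_false ha) this

lemma IsNecklace.eq_of_isRotated {a b : List Bool} (ha : IsNecklace a) (hb : IsNecklace b)
    (hab : a ~r b) : a = b := by
  obtain ⟨i, rfl⟩ := hab
  obtain ⟨j, hj⟩ := List.IsRotated.forall a i
  have hba := hb j
  rw [hj] at hba
  exact le_antisymm (not_lt.1 (ha i)) (not_lt.1 hba)

lemma exists_isNecklace_isRotated (w : List Bool) : ∃ r, r ~r w ∧ IsNecklace r := by
  obtain ⟨r, hr, hmin⟩ := w.cyclicPermutations.toFinset.exists_min_image id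
    ⟨w, List.mem_toFinset.2 (List.mem_cyclicPermutations_self w)⟩
  simp only [List.mem_toFinset, List.mem_cyclicPermutations_iff, id] at hr hmin
  exact ⟨r, hr, fun i => not_lt.2 (hmin _ ((List.IsRotated.forall r i).trans hr))⟩

def charWord (n : ℕ) (T : Finset ℕ) : List Bool :=
  List.ofFn fun j : Fin n => decide ((j : ℕ) ∈ T)

def trueIndices (l : List Bool) : Finset ℕ :=
  (Finset.range l.length).filter fun j => l[j]? = some true

@[simp] lemma length_charWord (n : ℕ) (T : Finset ℕ) : (charWord n T).length = n := by
  simp [charWord]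

@[simp] lemma getElem_charWord (n : ℕ) (T : Finset ℕ) (j : ℕ)
    (h : j < (charWord n T).length) :
    (charWord n T)[j] = decide (j ∈ T) := by
  simp [charWord]

lemma mem_trueIndices {l : List Bool} {j : ℕ} :
    j ∈ trueIndices l ↔ ∃ h : j < l.length, l[j] = true := by
  simp [trueIndices, List.getElem?_eq_some_iff]

lemma charWord_trueIndices (l : List Bool) : charWord l.length (trueIndices l) = l := by
  refine List.ext_getElem (length_charWord _ _) fun j hj _ => ?_
  simp [mem_trueIndices, (length_charWord _ _).symm ▸ hj]

lemma trueIndices_charWord {n : ℕ} {T : Finset ℕ} (hT : ∀ t ∈ T, t < n) :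
    trueIndices (charWord n T) = T := by
  ext j
  simp only [mem_trueIndices, length_charWord, getElem_charWord, decide_eq_true_eq]
  exact ⟨fun ⟨_, h⟩ => h, fun h => ⟨hT j h, h⟩⟩

lemma charWord_add {a b : ℕ} {T : Finset ℕ} (hT : ∀ t ∈ T, t < a) :
    charWord (a + b) T = charWord a T ++ List.replicate b false := by
  refine List.ext_getElem (by simp) fun j _ _ => ?_
  simp only [getElem_charWord, List.getElem_append, List.getElem_replicate, length_charWord]
  split_ifs with hj
  · simp
  · simpa using fun h => hj (hT j h)

lemma max_getD_mem {T : Finset ℕ} (hT : T.Nonempty) : T.max.getD 0 ∈ T := by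
  rw [← Finset.coe_max' hT]
  exact T.max'_mem hT

lemma le_max_getD {T : Finset ℕ} {t : ℕ} (ht : t ∈ T) : t ≤ T.max.getD 0 := by
  rw [← Finset.coe_max' ⟨t, ht⟩]
  exact T.le_max' t ht

lemma max_getD_eq {T : Finset ℕ} {m : ℕ} (hm : m ∈ T) (h : ∀ t ∈ T, t ≤ m) :
    T.max.getD 0 = m :=
  le_antisymm (h _ (max_getD_mem ⟨m, hm⟩)) (le_max_getD hm)

lemma binRep_eq_replicate_append_charWord (n : ℕ) (T : Finset ℕ) :
    binRep n T = List.replicate (n - T.max.getD 0 - 1) false ++ charWord (T.max.getD 0 + 1) T :=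
  rfl

lemma binRep_isRotated_charWord {n : ℕ} {T : Finset ℕ} (hT : T.Nonempty)
    (hTn : ∀ t ∈ T, t < n) : binRep n T ~r charWord n T := by
  have hm := hTn _ (max_getD_mem hT)
  have hsplit : charWord n T =
      charWord (T.max.getD 0 + 1) T ++ List.replicate (n - T.max.getD 0 - 1) false := by
    rw [← charWord_add fun t ht => Nat.lt_add_one_of_le (le_max_getD ht)]
    congr 1
    omega
  rw [binRep_eq_replicate_append_charWord, hsplit]
  exact List.isRotated_append

lemma binRep_trueIndices (c : ℕ) (v : List Bool) (hv : (true :: v).getLast? = some true) :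
    binRep (c + (v.length + 1)) (trueIndices (true :: v)) =
      List.replicate c false ++ true :: v := by
  have hmax : (trueIndices (true :: v)).max.getD 0 = v.length := by
    refine max_getD_eq (mem_trueIndices.2 ⟨by simp, ?_⟩) fun t ht => ?_
    · simpa [List.getLast?_eq_getElem?] using hv
    · obtain ⟨h, -⟩ := mem_trueIndices.1 ht
      simpa [Nat.lt_succ_iff] using h
  rw [binRep_eq_replicate_append_charWord, hmax,
    show c + (v.length + 1) - v.length - 1 = c by omega]
  exact congrArg _ (charWord_trueIndices (true :: v))

lemma dropWhile_not_binRep {n : ℕ} {T : Finset ℕ} (h0 : 0 ∈ T) :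
    (binRep n T).dropWhile (!·) = charWord (T.max.getD 0 + 1) T := by
  rw [binRep_eq_replicate_append_charWord, charWord, List.ofFn_succ, List.dropWhile_append,
    List.dropWhile_replicate]
  simp [h0]

lemma trueIndices_dropWhile_not_binRep {n : ℕ} {T : Finset ℕ} (h0 : 0 ∈ T) :
    trueIndices ((binRep n T).dropWhile (!·)) = T := by
  rw [dropWhile_not_binRep h0,
    trueIndices_charWord fun t ht => Nat.lt_add_one_of_le (le_max_getD ht)]

lemma binRep_inj_of_zero_mem {n : ℕ} {T₁ T₂ : Finset ℕ} (h₁ : 0 ∈ T₁) (h₂ : 0 ∈ T₂)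
    (h : binRep n T₁ = binRep n T₂) : T₁ = T₂ := by
  rw [← trueIndices_dropWhile_not_binRep h₁, ← trueIndices_dropWhile_not_binRep h₂, h]

lemma mod_add_sub_eq_iff {n i s j : ℕ} (hi : i ≤ n) (hs : s < n) (hj : j < n) :
    (s + i) % n = j ↔ (j + (n - i)) % n = s := by
  constructor <;> rintro rfl
  · rw [Nat.mod_add_mod, Nat.add_assoc, Nat.add_sub_cancel' hi, Nat.add_mod_right,
      Nat.mod_eq_of_lt hs]
  · rw [Nat.mod_add_mod, Nat.add_assoc, Nat.sub_add_cancel hi, Nat.add_mod_right,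
      Nat.mod_eq_of_lt hj]

lemma lt_of_mem_image_add_mod {n i t : ℕ} (hn : 0 < n) {S : Finset ℕ}
    (ht : t ∈ S.image fun s => (s + i) % n) : t < n := by
  obtain ⟨s, -, rfl⟩ := Finset.mem_image.1 ht
  exact Nat.mod_lt _ hn

lemma charWord_image_add_mod {n i : ℕ} (hi : i ≤ n) {S : Finset ℕ} (hS : ∀ s ∈ S, s < n) :
    charWord n (S.image fun s => (s + i) % n) = (charWord n S).rotate (n - i) := by
  refine List.ext_getElem (by simp) fun j hj _ => ?_
  replace hj : j < n := by simpa using hj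
  simp only [getElem_charWord, List.getElem_rotate, length_charWord, Finset.mem_image,
    decide_eq_decide]
  constructor
  · rintro ⟨s, hs, h⟩
    rwa [(mod_add_sub_eq_iff hi (hS s hs) hj).1 h]
  · exact fun h => ⟨_, h, (mod_add_sub_eq_iff hi (hS _ h) hj).2 rfl⟩

lemma exists_image_add_mod_of_isRotated {n : ℕ} (hn : 0 < n) {S T : Finset ℕ}
    (hS : ∀ s ∈ S, s < n) (hT : ∀ t ∈ T, t < n) (h : charWord n S ~r charWord n T) :
    ∃ i < n, T = S.image fun s => (s + i) % n := by
  obtain ⟨k, hk⟩ := h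
  set i := (n - k % n) % n
  have hi : i < n := Nat.mod_lt _ hn
  have hmod : (n - i) % n = k % n := by
    rcases Nat.eq_zero_or_pos (k % n) with h0 | hpos
    · simp [i, h0]
    · have : i = n - k % n := Nat.mod_eq_of_lt (by omega)
      rw [this, Nat.sub_sub_self (Nat.mod_lt _ hn).le, Nat.mod_mod]
  have hrot : (charWord n S).rotate (n - i) = (charWord n S).rotate k := by
    rw [← List.rotate_mod, ← List.rotate_mod _ k, length_charWord, hmod]
  refine ⟨i, hi, ?_⟩
  calc T = trueIndices ((charWord n S).rotate (n - i)) := by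
        rw [hrot, hk, trueIndices_charWord hT]
    _ = S.image fun s => (s + i) % n := by
      rw [← charWord_image_add_mod hi.le hS,
        trueIndices_charWord fun t ht => lt_of_mem_image_add_mod hn ht]

theorem stmt_18 (n : ℕ) (hn : 0 < n) (S : Finset ℕ) (hS : S.Nonempty)
    (hSsub : ∀ s ∈ S, s < n) :
    ∃! T : Finset ℕ,
      (∃ i : ℕ, i < n ∧ T = S.image fun s => (s + i) % n) ∧
      0 ∈ T ∧ IsNecklace (binRep n T) := by
  have hSw : true ∈ charWord n S := by
    obtain ⟨s, hs⟩ := hS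
    exact List.mem_ofFn.2 ⟨⟨s, hSsub s hs⟩, by simp [hs]⟩
  obtain ⟨r, hrS, hr⟩ := exists_isNecklace_isRotated (charWord n S)
  have htr : true ∈ r := hrS.mem_iff.2 hSw
  obtain ⟨c, v, rfl⟩ := List.exists_eq_replicate_false_append htr
  have hlast : (true :: v).getLast? = some true := by
    simpa using hr.getLast?_eq_true htr
  have hlen : n = c + (v.length + 1) := by
    simpa using hrS.perm.length_eq.symm
  set T := trueIndices (true :: v)
  have hT0 : 0 ∈ T := mem_trueIndices.2 ⟨by simp, rfl⟩
  have hTn : ∀ t ∈ T, t < n := fun t ht => by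
    obtain ⟨h, -⟩ := mem_trueIndices.1 ht
    rw [List.length_cons] at h
    omega
  have hbin : binRep n T = List.replicate c false ++ true :: v :=
    hlen ▸ binRep_trueIndices c v hlast
  obtain ⟨i, hi, hTS⟩ := exists_image_add_mod_of_isRotated hn hSsub hTn
    (hrS.symm.trans (hbin ▸ binRep_isRotated_charWord ⟨0, hT0⟩ hTn))
  refine ⟨T, ⟨⟨i, hi, hTS⟩, hT0, hbin ▸ hr⟩, ?_⟩
  rintro T' ⟨⟨i', hi', rfl⟩, hT'0, hT'⟩
  refine binRep_inj_of_zero_mem hT'0 hT0 (hT'.eq_of_isRotated (hbin ▸ hr) ?_)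
  have hT'S := binRep_isRotated_charWord ⟨0, hT'0⟩ fun t ht => lt_of_mem_image_add_mod hn ht
  rw [charWord_image_add_mod hi'.le hSsub] at hT'S
  exact hT'S.trans ((List.IsRotated.forall _ _).trans (hbin ▸ hrS.symm))
end
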